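/- For each k ∈ (0,1), the function K is differentiable at k with derivative dK/dk = (E(k) − k'²K(k))/(k k'²), where k' = √(1−k²). -/

import Mathlib

open Real

/-- Complete elliptic integral of the first kind. -/
noncomputable def EllK (k : ℝ) : ℝ :=
  ∫ θ in (0:ℝ)..(π/2), 1 / Real.sqrt (1 - k^2 * Real.sin θ ^ 2)

/-- Complete elliptic integral of the second kind. -/
noncomputable def EllE (k : ℝ) : ℝ :=
  ∫ θ in (0:ℝ)..(π/2), Real.sqrt (1 - k^2 * Real.sin θ ^ 2)

/-- Complementary complete elliptic integral `K'(k) = K(√(1-k²))`. -/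
noncomputable def EllK' (k : ℝ) : ℝ := EllK (Real.sqrt (1 - k^2))

/-- Complementary elliptic integral of the second kind `E'(k) = E(√(1-k²))`. -/
noncomputable def EllE' (k : ℝ) : ℝ := EllE (Real.sqrt (1 - k^2))

/-- The nome `q = exp(-π K'(k)/K(k))`. -/
noncomputable def nome (k : ℝ) : ℝ := Real.exp (-π * EllK' k / EllK k)

/-- Jacobi's theta function `Θ(u,k) = 1 + 2 ∑_{n≥1} (-1)^n q^{n²} cos(nπu/K)`. -/
noncomputable def JTheta (u k : ℝ) : ℝ :=
  1 + 2 * ∑' n : ℕ, (-1 : ℝ)^(n+1) * nome k ^ ((n+1)^2) *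
    Real.cos (((n:ℝ)+1) * π * u / EllK k)

/-- Jacobi's theta function `H(u,k) = 2 ∑_{n≥0} (-1)^n q^{(n+1/2)²} sin((2n+1)πu/(2K))`. -/
noncomputable def JH (u k : ℝ) : ℝ :=
  2 * ∑' n : ℕ, (-1 : ℝ)^n * nome k ^ ((((n:ℝ) + 1/2)^2)) *
    Real.sin ((2*(n:ℝ)+1) * π * u / (2 * EllK k))

/-- Jacobi's theta function `H₁(u,k) = 2 ∑_{n≥0} q^{(n+1/2)²} cos((2n+1)πu/(2K))`. -/
noncomputable def JH1 (u k : ℝ) : ℝ :=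
  2 * ∑' n : ℕ, nome k ^ ((((n:ℝ) + 1/2)^2)) *
    Real.cos ((2*(n:ℝ)+1) * π * u / (2 * EllK k))

/-- Jacobi's theta function `Θ₁(u,k) = 1 + 2 ∑_{n≥1} q^{n²} cos(nπu/K)`. -/
noncomputable def JTheta1 (u k : ℝ) : ℝ :=
  1 + 2 * ∑' n : ℕ, nome k ^ ((n+1)^2) * Real.cos (((n:ℝ)+1) * π * u / EllK k)

/-- Jacobi's zeta function `zn(u,k) = Θ_u(u,k)/Θ(u,k)`. -/
noncomputable def zn (u k : ℝ) : ℝ := deriv (fun v => JTheta v k) u / JTheta u k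

/-- Jacobi's elliptic sine `sn(u,k) = H(u,k)/(√k Θ(u,k))`. -/
noncomputable def sn (u k : ℝ) : ℝ := JH u k / (Real.sqrt k * JTheta u k)

/-- Jacobi's elliptic cosine `cn(u,k) = √(k'/k) H₁(u,k)/Θ(u,k)`. -/
noncomputable def cn (u k : ℝ) : ℝ :=
  Real.sqrt (Real.sqrt (1 - k^2) / k) * JH1 u k / JTheta u k

/-- Jacobi's delta amplitude `dn(u,k) = √(k') Θ₁(u,k)/Θ(u,k)`. -/
noncomputable def dn (u k : ℝ) : ℝ :=
  Real.sqrt (Real.sqrt (1 - k^2)) * JTheta1 u k / JTheta u k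

/-
Differentiating under the integral sign (legitimate since, for `x ^ 2 < c < 1`, the
`x`-derivative `x sin² θ / Δ^{3/2}` of `Δ^{-1/2}`, `Δ = 1 - x² sin² θ`, is bounded by
`(1 - c)^{-3/2}`) gives `K'(k) = ∫ k sin² θ / Δ^{3/2}`. This integral reduces to `E` and `K`
because `√Δ - k'² / √Δ - k k'² · k sin² θ / Δ^{3/2}` is the `θ`-derivative of
`k² sin θ cos θ / √Δ`, which vanishes at `θ = 0` and `θ = π/2`.
-/

open intervalIntegral MeasureTheory Topology

lemma one_sub_sq_mul_sin_sq_pos {k : ℝ} (hk : k ^ 2 < 1) (θ : ℝ) :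
    0 < 1 - k ^ 2 * sin θ ^ 2 := by
  nlinarith [sin_sq_le_one θ, sq_nonneg k]

lemma continuous_sqrt_one_sub_sq_mul_sin_sq (k : ℝ) :
    Continuous fun θ => √(1 - k ^ 2 * sin θ ^ 2) := by
  fun_prop

lemma continuous_one_div_sqrt_one_sub_sq_mul_sin_sq {k : ℝ} (hk : k ^ 2 < 1) :
    Continuous fun θ => 1 / √(1 - k ^ 2 * sin θ ^ 2) :=
  continuous_const.div (continuous_sqrt_one_sub_sq_mul_sin_sq k)
    fun θ => (sqrt_pos.2 (one_sub_sq_mul_sin_sq_pos hk θ)).ne'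

lemma hasDerivAt_one_div_sqrt_one_sub_sq_mul_sin_sq {k : ℝ} (hk : k ^ 2 < 1) (θ : ℝ) :
    HasDerivAt (fun x => 1 / √(1 - x ^ 2 * sin θ ^ 2))
      (k * sin θ ^ 2 / √(1 - k ^ 2 * sin θ ^ 2) ^ 3) k := by
  have hΔ := one_sub_sq_mul_sin_sq_pos hk θ
  have h := (hasDerivAt_const k (1 : ℝ)).div
    ((((hasDerivAt_pow 2 k).mul_const (sin θ ^ 2)).const_sub 1).sqrt hΔ.ne') (sqrt_pos.2 hΔ).ne'
  refine h.congr_deriv ?_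
  norm_num
  field_simp

lemma continuous_sin_sq_div_sqrt_cube {k : ℝ} (hk : k ^ 2 < 1) :
    Continuous fun θ => k * sin θ ^ 2 / √(1 - k ^ 2 * sin θ ^ 2) ^ 3 :=
  (by fun_prop : Continuous fun θ => k * sin θ ^ 2).div
    ((continuous_sqrt_one_sub_sq_mul_sin_sq k).pow 3)
    fun θ => pow_ne_zero 3 (sqrt_pos.2 (one_sub_sq_mul_sin_sq_pos hk θ)).ne'

lemma hasDerivAt_ellK {k : ℝ} (hk : k ^ 2 < 1) :
    HasDerivAt EllK (∫ θ in (0 : ℝ)..(π / 2), k * sin θ ^ 2 / √(1 - k ^ 2 * sin θ ^ 2) ^ 3) k := by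
  obtain ⟨c, hkc, hc⟩ := exists_between hk
  have hs : {x : ℝ | x ^ 2 < c} ∈ 𝓝 k :=
    (isOpen_lt (continuous_pow 2) continuous_const).mem_nhds hkc
  have hbound : ∀ x ∈ {x : ℝ | x ^ 2 < c}, ∀ θ : ℝ,
      ‖x * sin θ ^ 2 / √(1 - x ^ 2 * sin θ ^ 2) ^ 3‖ ≤ 1 / √(1 - c) ^ 3 := by
    intro x (hx : x ^ 2 < c) θ
    have hδ : √(1 - c) ≤ √(1 - x ^ 2 * sin θ ^ 2) :=
      sqrt_le_sqrt (by nlinarith [sin_sq_le_one θ, sq_nonneg x])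
    have hnum : |x| * sin θ ^ 2 ≤ 1 :=
      mul_le_one₀ ((sq_lt_one_iff_abs_lt_one x).1 (hx.trans hc)).le (sq_nonneg _) (sin_sq_le_one θ)
    simp only [norm_div, norm_mul, norm_pow, Real.norm_eq_abs, sq_abs,
      abs_of_nonneg (sqrt_nonneg _)]
    gcongr
  exact (hasDerivAt_integral_of_dominated_loc_of_deriv_le (a := 0) (b := π / 2)
    (F := fun x θ => 1 / √(1 - x ^ 2 * sin θ ^ 2))
    (F' := fun x θ => x * sin θ ^ 2 / √(1 - x ^ 2 * sin θ ^ 2) ^ 3) hs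
    (.of_forall fun x => (by fun_prop : Measurable _).aestronglyMeasurable)
    ((continuous_one_div_sqrt_one_sub_sq_mul_sin_sq hk).intervalIntegrable _ _)
    (continuous_sin_sq_div_sqrt_cube hk).aestronglyMeasurable
    (.of_forall fun θ _ x hx => hbound x hx θ) intervalIntegrable_const
    (.of_forall fun θ _ x (hx : x ^ 2 < c) =>
      hasDerivAt_one_div_sqrt_one_sub_sq_mul_sin_sq (hx.trans hc) θ)).2

lemma hasDerivAt_sin_mul_cos_div_sqrt {k : ℝ} (hk : k ^ 2 < 1) (θ : ℝ) :
    HasDerivAt (fun t => k ^ 2 * (sin t * cos t) / √(1 - k ^ 2 * sin t ^ 2))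
      (√(1 - k ^ 2 * sin θ ^ 2) - (1 - k ^ 2) * (1 / √(1 - k ^ 2 * sin θ ^ 2))
        - k * (1 - k ^ 2) * (k * sin θ ^ 2 / √(1 - k ^ 2 * sin θ ^ 2) ^ 3)) θ := by
  have hΔ := one_sub_sq_mul_sin_sq_pos hk θ
  have hδ : √(1 - k ^ 2 * sin θ ^ 2) ^ 2 = 1 - k ^ 2 * sin θ ^ 2 := sq_sqrt hΔ.le
  have h := (((hasDerivAt_sin θ).mul (hasDerivAt_cos θ)).const_mul (k ^ 2)).div
    ((((hasDerivAt_sin θ).pow 2).const_mul (k ^ 2)).const_sub 1 |>.sqrt hΔ.ne') (sqrt_pos.2 hΔ).ne'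
  refine h.congr_deriv ?_
  simp only [Pi.mul_apply, Pi.pow_apply]
  field_simp
  norm_num
  rw [hδ, cos_sq']
  ring

lemma integral_sin_sq_div_sqrt_cube {k : ℝ} (hk : k ^ 2 < 1) :
    k * (1 - k ^ 2) * ∫ θ in (0 : ℝ)..(π / 2), k * sin θ ^ 2 / √(1 - k ^ 2 * sin θ ^ 2) ^ 3 =
      EllE k - (1 - k ^ 2) * EllK k := by
  have hE := (continuous_sqrt_one_sub_sq_mul_sin_sq k).intervalIntegrable (μ := volume) 0 (π / 2)
  have hK := ((continuous_one_div_sqrt_one_sub_sq_mul_sin_sq hk).intervalIntegrable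
    (μ := volume) 0 (π / 2)).const_mul (1 - k ^ 2)
  have hI := ((continuous_sin_sq_div_sqrt_cube hk).intervalIntegrable
    (μ := volume) 0 (π / 2)).const_mul (k * (1 - k ^ 2))
  have hftc := integral_eq_sub_of_hasDerivAt (fun θ _ => hasDerivAt_sin_mul_cos_div_sqrt hk θ)
    ((hE.sub hK).sub hI)
  rw [integral_sub (hE.sub hK) hI, integral_sub hE hK, intervalIntegral.integral_const_mul,
    intervalIntegral.integral_const_mul, sin_zero, cos_pi_div_two] at hftc
  simp only [zero_mul, mul_zero, zero_div, sub_zero] at hftc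
  unfold EllE EllK
  linarith

theorem stmt_6 (k : ℝ) (hk : k ∈ Set.Ioo (0:ℝ) 1) :
    HasDerivAt EllK
      ((EllE k - Real.sqrt (1 - k^2) ^ 2 * EllK k) / (k * Real.sqrt (1 - k^2) ^ 2)) k := by
  obtain ⟨hk0, hk1⟩ := hk
  have hk2 : k ^ 2 < 1 := by nlinarith
  have hkk' : k * (1 - k ^ 2) ≠ 0 := mul_ne_zero hk0.ne' (by linarith)
  rw [sq_sqrt (by linarith), ← integral_sin_sq_div_sqrt_cube hk2, mul_div_cancel_left₀ _ hkk']
  exact hasDerivAt_ellK hk2
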